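/- Conditional variance bound for empirical OLS: let K be spanned by functions p₁,...,p_K, let X₁,...,X_M be i.i.d., let G∨H be a σ-algebra making all p_j(X_m) measurable, and suppose the conditional variances satisfy E[|S(X_m) - E[S(X_m)|G∨H]|² | G∨H] ≤ σ² a.s. for each m, with the residuals conditionally independent across m. If S* solves the empirical least-squares problem, then E[ (1/M)Σ_m |S*(X_m) - E[S*(X_m)|G∨H]|² | G∨H ] ≤ σ² K / M. -/

import Mathlib

/-! Because the design is `G`-measurable, the coefficients of the empirical projection pull out
of `μ[·|G]`, so the residual of `S*` is the projection of the residuals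
`ε m = S m - μ[S m|G]`. By empirical orthonormality its empirical mean square is `∑ j, x j ^ 2`
with `x j = M⁻¹ ∑ m, Pm j m * ε m`; conditionally on `G` the cross terms `ε m * ε m'` vanish,
so `μ[x j ^ 2|G] ≤ σ² M⁻² ∑ m, Pm j m ^ 2 = σ² / M`. -/

open MeasureTheory Finset

section Algebra

variable {ι κ : Type*} [Fintype ι] [Fintype κ]

theorem mul_sum_sq_sum_mul_eq_sum_sq_of_orthonormal [DecidableEq ι] {c : ℝ} (x : ι → ℝ)
    {y : ι → κ → ℝ} (horth : ∀ i j, c * ∑ k, y i k * y j k = if i = j then 1 else 0) :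
    c * ∑ k, (∑ i, x i * y i k) ^ 2 = ∑ i, x i ^ 2 := by
  calc c * ∑ k, (∑ i, x i * y i k) ^ 2
      = ∑ i, ∑ j, x i * x j * (c * ∑ k, y i k * y j k) := by
        simp_rw [sq, sum_mul_sum, mul_sum]
        rw [sum_comm]
        refine sum_congr rfl fun i _ => ?_
        rw [sum_comm]
        exact sum_congr rfl fun j _ => sum_congr rfl fun k _ => by ring
    _ = ∑ i, x i ^ 2 := by simp [horth, sq]

theorem sum_sum_mul_mul_le_of_diag_le {a : ι → ℝ} {C : ι → ι → ℝ} {c : ℝ}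
    (hdiag : ∀ i, C i i ≤ c) (hoff : ∀ i j, i ≠ j → C i j = 0) :
    ∑ i, ∑ j, a i * a j * C i j ≤ c * ∑ i, a i ^ 2 := by
  calc ∑ i, ∑ j, a i * a j * C i j = ∑ i, a i ^ 2 * C i i := by
        refine sum_congr rfl fun i _ => ?_
        rw [sum_eq_single i (fun j _ hj => by rw [hoff i j (Ne.symm hj), mul_zero]) (by simp), sq]
    _ ≤ ∑ i, a i ^ 2 * c := sum_le_sum fun i _ => mul_le_mul_of_nonneg_left (hdiag i) (sq_nonneg _)
    _ = c * ∑ i, a i ^ 2 := by rw [mul_sum]; simp_rw [mul_comm c]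

end Algebra

section CondExp

variable {Ω ι : Type*} [Fintype ι] {m mΩ : MeasurableSpace Ω} {μ : Measure Ω}

theorem memLp_sum_mul_of_memLp_top {p : ENNReal} {a f : ι → Ω → ℝ} (ha : ∀ i, MemLp (a i) ⊤ μ)
    (hf : ∀ i, MemLp (f i) p μ) : MemLp (fun ω => ∑ i, a i ω * f i ω) p μ := by
  simpa only [← Finset.sum_fn] using memLp_finsetSum' univ fun i _ => (hf i).mul' (ha i)

theorem condExp_sum_mul_of_stronglyMeasurable {a f : ι → Ω → ℝ}
    (ha : ∀ i, StronglyMeasurable[m] (a i)) (ha_bdd : ∀ i, MemLp (a i) ⊤ μ)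
    (hf : ∀ i, Integrable (f i) μ) :
    μ[fun ω => ∑ i, a i ω * f i ω | m] =ᵐ[μ] fun ω => ∑ i, a i ω * μ[f i | m] ω := by
  have hint : ∀ i, Integrable (a i * f i) μ := fun i => (hf i).mul_of_top_right (ha_bdd i)
  have hsum : (fun ω => ∑ i, a i ω * f i ω) = ∑ i, a i * f i := by ext ω; simp
  have hpull : ∀ᵐ ω ∂μ, ∀ i, μ[a i * f i | m] ω = a i ω * μ[f i | m] ω :=
    ae_all_iff.2 fun i => condExp_mul_of_stronglyMeasurable_left (ha i) (hint i) (hf i)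
  filter_upwards [hsum ▸ condExp_finsetSum (fun i _ => hint i) m, hpull] with ω hsum hpull
  simp [hsum, hpull]

theorem sub_condExp_sum_mul_of_stronglyMeasurable {a f : ι → Ω → ℝ}
    (ha : ∀ i, StronglyMeasurable[m] (a i)) (ha_bdd : ∀ i, MemLp (a i) ⊤ μ)
    (hf : ∀ i, Integrable (f i) μ) :
    (fun ω => ∑ i, a i ω * f i ω - μ[fun ω => ∑ i, a i ω * f i ω | m] ω) =ᵐ[μ]
      fun ω => ∑ i, a i ω * (f i ω - μ[f i | m] ω) := by
  filter_upwards [condExp_sum_mul_of_stronglyMeasurable ha ha_bdd hf] with ω h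
  simp [h, mul_sub]

theorem condExp_sq_sum_mul_le {a ε : ι → Ω → ℝ} {σ : ℝ}
    (ha : ∀ i, StronglyMeasurable[m] (a i)) (ha_bdd : ∀ i, MemLp (a i) ⊤ μ)
    (hε : ∀ i, MemLp (ε i) 2 μ)
    (hvar : ∀ i, μ[fun ω => ε i ω ^ 2 | m] ≤ᵐ[μ] fun _ => σ ^ 2)
    (hcross : ∀ i j, i ≠ j → μ[fun ω => ε i ω * ε j ω | m] =ᵐ[μ] fun _ => (0 : ℝ)) :
    μ[fun ω => (∑ i, a i ω * ε i ω) ^ 2 | m] ≤ᵐ[μ] fun ω => σ ^ 2 * ∑ i, a i ω ^ 2 := by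
  have hexpand : (fun ω => (∑ i, a i ω * ε i ω) ^ 2) =
      fun ω => ∑ p : ι × ι, (a p.1 ω * a p.2 ω) * (ε p.1 ω * ε p.2 ω) := by
    ext ω
    rw [sq, sum_mul_sum, ← univ_product_univ, sum_product]
    exact sum_congr rfl fun i _ => sum_congr rfl fun j _ => by ring
  have hpull := condExp_sum_mul_of_stronglyMeasurable (m := m) (μ := μ)
    (a := fun p : ι × ι => fun ω => a p.1 ω * a p.2 ω)
    (f := fun p : ι × ι => fun ω => ε p.1 ω * ε p.2 ω)
    (fun p => (ha p.1).mul (ha p.2)) (fun p => (ha_bdd p.2).mul' (ha_bdd p.1))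
    (fun p => (hε p.1).integrable_mul (hε p.2))
  have hdiag : ∀ i, μ[fun ω => ε i ω * ε i ω | m] ≤ᵐ[μ] fun _ => σ ^ 2 := by
    simpa only [sq] using hvar
  have hoff : ∀ᵐ ω ∂μ, ∀ i j, i ≠ j → μ[fun ω => ε i ω * ε j ω | m] ω = 0 := by
    refine ae_all_iff.2 fun i => ae_all_iff.2 fun j => ?_
    by_cases hij : i = j
    · exact .of_forall fun _ hne => absurd hij hne
    · filter_upwards [hcross i j hij] with ω hω _ using hω
  rw [hexpand]
  filter_upwards [hpull, ae_all_iff.2 hdiag, hoff] with ω hpull hdiag hoff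
  rw [hpull, Fintype.sum_prod_type]
  exact sum_sum_mul_mul_le_of_diag_le (a := fun i => a i ω) hdiag hoff

theorem condExp_sq_mul_sum_mul_le {a ε : ι → Ω → ℝ} {c σ : ℝ}
    (ha : ∀ i, StronglyMeasurable[m] (a i)) (ha_bdd : ∀ i, MemLp (a i) ⊤ μ)
    (hε : ∀ i, MemLp (ε i) 2 μ)
    (hvar : ∀ i, μ[fun ω => ε i ω ^ 2 | m] ≤ᵐ[μ] fun _ => σ ^ 2)
    (hcross : ∀ i j, i ≠ j → μ[fun ω => ε i ω * ε j ω | m] =ᵐ[μ] fun _ => (0 : ℝ))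
    (hnorm : (fun ω => c * ∑ i, a i ω * a i ω) =ᵐ[μ] fun _ => (1 : ℝ)) :
    μ[fun ω => (c * ∑ i, a i ω * ε i ω) ^ 2 | m] ≤ᵐ[μ] fun _ => σ ^ 2 * c := by
  have hsq : (fun ω => (c * ∑ i, a i ω * ε i ω) ^ 2) =
      fun ω => (∑ i, (c * a i ω) * ε i ω) ^ 2 := by
    ext ω; simp only [mul_sum, mul_assoc]
  rw [hsq]
  filter_upwards [condExp_sq_sum_mul_le (fun i => stronglyMeasurable_const.mul (ha i))
    (fun i => (ha_bdd i).const_mul c) hε hvar hcross, hnorm] with ω h hnorm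
  refine h.trans_eq ?_
  calc σ ^ 2 * ∑ i, (c * a i ω) ^ 2 = σ ^ 2 * c * (c * ∑ i, a i ω * a i ω) := by
        rw [mul_sum, mul_sum, mul_sum]; exact sum_congr rfl fun i _ => by ring
    _ = σ ^ 2 * c := by rw [hnorm, mul_one]

theorem sub_condExp_projection_of_stronglyMeasurable {J I : Type*} [Fintype J] [Fintype I]
    {P : J → I → Ω → ℝ} {S : I → Ω → ℝ} (c : ℝ) (hP : ∀ j i, StronglyMeasurable[m] (P j i))
    (hP_bdd : ∀ j i, MemLp (P j i) ⊤ μ) (hS : ∀ i, Integrable (S i) μ) (k : I) :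
    (fun ω => ∑ j, (c * ∑ i, P j i ω * S i ω) * P j k ω -
        μ[fun ω => ∑ j, (c * ∑ i, P j i ω * S i ω) * P j k ω | m] ω) =ᵐ[μ]
      fun ω => ∑ j, (c * ∑ i, P j i ω * (S i ω - μ[S i | m] ω)) * P j k ω := by
  have hform : ∀ (T : I → ℝ) ω, ∑ j, (c * ∑ i, P j i ω * T i) * P j k ω =
      ∑ p : J × I, (c * P p.1 p.2 ω * P p.1 k ω) * T p.2 := by
    intro T ω
    rw [Fintype.sum_prod_type]
    refine sum_congr rfl fun j _ => ?_
    rw [mul_sum, sum_mul]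
    exact sum_congr rfl fun i _ => by ring
  simp_rw [hform]
  exact sub_condExp_sum_mul_of_stronglyMeasurable
    (fun p => (stronglyMeasurable_const.mul (hP p.1 p.2)).mul (hP p.1 k))
    (fun p => (hP_bdd p.1 k).mul' ((hP_bdd p.1 p.2).const_mul c)) fun p => hS p.2

end CondExp

theorem ols_conditional_variance_bound_general
    {Ω : Type*} [m0 : MeasurableSpace Ω]
    (μ : Measure Ω) [IsProbabilityMeasure μ]
    (G : MeasurableSpace Ω)
    (M K : ℕ) (σ : ℝ)
    (Pm : Fin K → Fin M → Ω → ℝ) (S : Fin M → Ω → ℝ)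
    -- the design variables are G-measurable and bounded; the targets are in L²
    (hPmeas : ∀ j m, StronglyMeasurable[G] (Pm j m))
    (hPbdd : ∀ j m, MemLp (Pm j m) ⊤ μ)
    (hS : ∀ m, MemLp (S m) 2 μ)
    -- empirical orthonormality of the design
    (horth : ∀ j j',
      (fun ω => (M : ℝ)⁻¹ * ∑ m, Pm j m ω * Pm j' m ω) =ᵐ[μ]
        fun _ => if j = j' then (1 : ℝ) else 0)
    -- conditional variance bound on the residuals
    (hvar : ∀ m,
      μ[fun ω => (S m ω - (μ[S m|G]) ω) ^ 2 | G] ≤ᵐ[μ] fun _ => σ ^ 2)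
    -- residuals are conditionally uncorrelated across samples
    (hcross : ∀ m m', m ≠ m' →
      μ[fun ω => (S m ω - (μ[S m|G]) ω) * (S m' ω - (μ[S m'|G]) ω) | G]
        =ᵐ[μ] fun _ => (0 : ℝ))
    -- the empirical least-squares projection evaluated at the samples
    (Sstar : Fin M → Ω → ℝ)
    (hSstar : ∀ m, Sstar m = fun ω =>
      ∑ j, ((M : ℝ)⁻¹ * ∑ m', Pm j m' ω * S m' ω) * Pm j m ω) :
    μ[fun ω => (M : ℝ)⁻¹ * ∑ m, (Sstar m ω - (μ[Sstar m|G]) ω) ^ 2 | G]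
      ≤ᵐ[μ] fun _ => σ ^ 2 * K / M := by
  set ε : Fin M → Ω → ℝ := fun m ω => S m ω - μ[S m | G] ω
  set x : Fin K → Ω → ℝ := fun j ω => (M : ℝ)⁻¹ * ∑ m, Pm j m ω * ε m ω
  have hε : ∀ m, MemLp (ε m) 2 μ := fun m => (hS m).sub ((hS m).condExp one_le_two)
  have hresid : (fun ω => (M : ℝ)⁻¹ * ∑ m, (Sstar m ω - μ[Sstar m | G] ω) ^ 2) =ᵐ[μ]
      fun ω => ∑ j, x j ω ^ 2 := by
    have hres : ∀ m, (fun ω => Sstar m ω - μ[Sstar m | G] ω) =ᵐ[μ]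
        fun ω => ∑ j, x j ω * Pm j m ω := by
      intro m
      rw [hSstar m]
      exact sub_condExp_projection_of_stronglyMeasurable (M : ℝ)⁻¹ hPmeas hPbdd
        (fun m => (hS m).integrable one_le_two) m
    filter_upwards [ae_all_iff.2 hres, ae_all_iff.2 fun j => ae_all_iff.2 (horth j)]
      with ω hres horth
    simp_rw [hres]
    exact mul_sum_sq_sum_mul_eq_sum_sq_of_orthonormal _ horth
  have hx_var : ∀ j, μ[fun ω => x j ω ^ 2 | G] ≤ᵐ[μ] fun _ => σ ^ 2 * (M : ℝ)⁻¹ := fun j =>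
    condExp_sq_mul_sum_mul_le (hPmeas j) (hPbdd j) hε hvar hcross (by simpa using horth j j)
  have hx_int : ∀ j, Integrable (fun ω => x j ω ^ 2) μ := fun j =>
    ((memLp_sum_mul_of_memLp_top (hPbdd j) hε).const_mul _).integrable_sq
  have hsum : μ[fun ω => ∑ j, x j ω ^ 2 | G] =ᵐ[μ] ∑ j, μ[fun ω => x j ω ^ 2 | G] := by
    simpa only [← Finset.sum_fn] using condExp_finsetSum (fun j _ => hx_int j) G
  filter_upwards [condExp_congr_ae hresid, hsum, ae_all_iff.2 hx_var]
    with ω hresid hsum hx_var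
  calc _ = ∑ j, μ[fun ω => x j ω ^ 2 | G] ω := by rw [hresid, hsum, Finset.sum_apply]
    _ ≤ ∑ _j : Fin K, σ ^ 2 * (M : ℝ)⁻¹ := sum_le_sum fun j _ => hx_var j
    _ = σ ^ 2 * K / M := by rw [sum_const, card_univ, Fintype.card_fin, nsmul_eq_mul]; ring

/-- Conditional variance bound for empirical OLS: with design variables
`Pm j m` (the values `p_j(X_m)`), measurable w.r.t. `G∨H` (here a single
σ-algebra `G`), orthonormal for the empirical inner product, targets `S m` with
conditionally independent residuals of conditional variance at most `σ²`, the
empirical projection `S*` satisfies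
`E[(1/M) Σ_m |S*(X_m) - E[S*(X_m)|G]|² | G] ≤ σ² K / M` a.s. -/
theorem ols_conditional_variance_bound
    {Ω : Type*} [m0 : MeasurableSpace Ω]
    (μ : Measure Ω) [IsProbabilityMeasure μ]
    (G : MeasurableSpace Ω) (hG : G ≤ m0)
    (M K : ℕ) (hM : 0 < M) (σ : ℝ)
    (Pm : Fin K → Fin M → Ω → ℝ) (S : Fin M → Ω → ℝ)
    -- the design variables are G-measurable and bounded; the targets are in L²
    (hPmeas : ∀ j m, StronglyMeasurable[G] (Pm j m))
    (hPbdd : ∀ j m, MemLp (Pm j m) ⊤ μ)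
    (hS : ∀ m, MemLp (S m) 2 μ)
    -- empirical orthonormality of the design
    (horth : ∀ j j',
      (fun ω => (M : ℝ)⁻¹ * ∑ m, Pm j m ω * Pm j' m ω) =ᵐ[μ]
        fun _ => if j = j' then (1 : ℝ) else 0)
    -- conditional variance bound on the residuals
    (hvar : ∀ m,
      μ[fun ω => (S m ω - (μ[S m|G]) ω) ^ 2 | G] ≤ᵐ[μ] fun _ => σ ^ 2)
    -- residuals are conditionally uncorrelated across samples
    (hcross : ∀ m m', m ≠ m' →
      μ[fun ω => (S m ω - (μ[S m|G]) ω) * (S m' ω - (μ[S m'|G]) ω) | G]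
        =ᵐ[μ] fun _ => (0 : ℝ))
    -- the empirical least-squares projection evaluated at the samples
    (Sstar : Fin M → Ω → ℝ)
    (hSstar : ∀ m, Sstar m = fun ω =>
      ∑ j, ((M : ℝ)⁻¹ * ∑ m', Pm j m' ω * S m' ω) * Pm j m ω) :
    μ[fun ω => (M : ℝ)⁻¹ * ∑ m, (Sstar m ω - (μ[Sstar m|G]) ω) ^ 2 | G]
      ≤ᵐ[μ] fun _ => σ ^ 2 * K / M :=
  ols_conditional_variance_bound_general (m0 := m0) μ G M K σ Pm S hPmeas hPbdd hS horth hvar hcross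
    Sstar hSstar
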